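/- (Smoothness of the ANIL meta-gradient in w under a strongly convex inner loop: per-task explicit bound.) Let L_S, L_D : ℝ^{n_w} × ℝ^{n_φ} → ℝ be twice continuously differentiable such that: ∇L_S and ∇L_D are L-Lipschitz jointly in (w,φ); L_D is M-Lipschitz; ∇²_w L_S is ρ-Lipschitz jointly in (w,φ) (in operator norm); and for every φ the function w ↦ L_S(w,φ) is μ-strongly convex, with 0 < μ ≤ L. Set α = μ/L² and let N ≥ 1. Define the inner-loop path w_0(w,φ) = w, w_{m+1}(w,φ) = w_m(w,φ) − α∇_w L_S(w_m(w,φ), φ), and the partial meta-gradient 𝑔(w,φ) := ∏_{m=0}^{N−1}(I − α∇²_w L_S(w_m(w,φ), φ)) · ∇_w L_D(w_N(w,φ), φ) (product ordered with the m = 0 factor leftmost). Then for any two points (w₁,φ₁), (w₂,φ₂): ‖𝑔(w₁,φ₁) − 𝑔(w₂,φ₂)‖ ≤ ( (1−αμ)^{3N/2} L + (2ρM/μ)(1−αμ)^{N−1} )·‖w₁ − w₂‖ + ( (1−αμ)^N L + αρMN(1−αμ)^{N−1} )·(2L/μ + 1)·‖φ₁ − φ₂‖. -/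

import Mathlib

open scoped RealInnerProductSpace

noncomputable section

abbrev Euc (n : ℕ) : Type := EuclideanSpace ℝ (Fin n)

variable {nw nf : ℕ}

/-- The partial gradient `∇_w h(w,φ)`. -/
noncomputable def gradW (h : Euc nw × Euc nf → ℝ) (w : Euc nw) (φ : Euc nf) : Euc nw :=
  gradient (fun w' => h (w', φ)) w

/-- The partial gradient `∇_φ h(w,φ)`. -/
noncomputable def gradPh (h : Euc nw × Euc nf → ℝ) (w : Euc nw) (φ : Euc nf) : Euc nf :=
  gradient (fun φ' => h (w, φ')) φ

/-- The Hessian `∇²_w h(w,φ)` of `w ↦ h(w,φ)`, as a continuous linear map. -/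
noncomputable def hessW (h : Euc nw × Euc nf → ℝ) (w : Euc nw) (φ : Euc nf) :
    Euc nw →L[ℝ] Euc nw :=
  fderiv ℝ (fun w' => gradW h w' φ) w

/-- The Fréchet derivative in `φ` of `φ ↦ ∇_w h(w,φ)`; the paper's mixed second
derivative matrix `∇_φ∇_w h(w,φ)` is its adjoint. -/
noncomputable def mixPW (h : Euc nw × Euc nf → ℝ) (w : Euc nw) (φ : Euc nf) :
    Euc nf →L[ℝ] Euc nw :=
  fderiv ℝ (fun φ' => gradW h w φ') φ

/-!
With `α = μ / L²`, one inner gradient step is a `√(1 - αμ)`-contraction in `w` (strong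
monotonicity of `∇_w L_S` against its `L`-Lipschitz bound), and changing `φ` moves it by at most
`αL‖φ - φ'‖`; so inner paths started at `w₁, w₂` stay within `(1 - αμ)^{m/2} ‖w₁ - w₂‖`, and paths
run with `φ₁, φ₂` within `(2L/μ) ‖φ₁ - φ₂‖`. Each factor `I - α∇²_w L_S` is symmetric with
quadratic form between `1 - αL ≥ 0` and `1 - αμ`, hence has norm at most `1 - αμ`, and it is
`αρ`-Lipschitz. Telescoping, two products of `N` such factors differ by at most
`(1 - αμ)^{N-1}` times the sum of the factor differences, while `∇_w L_D` is bounded by `M` and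
`L`-Lipschitz. Passing from `(w₁, φ₁)` to `(w₂, φ₂)` through `(w₂, φ₁)` gives the two terms.
-/

theorem sqrt_sq_add_sq_le_add {x y : ℝ} (hx : 0 ≤ x) (hy : 0 ≤ y) : √(x ^ 2 + y ^ 2) ≤ x + y :=
  (Real.sqrt_le_left (add_nonneg hx hy)).2 (by nlinarith)

theorem le_mul_add_of_sqrt_le_mul_sqrt {a b x y K : ℝ} (hK : 0 ≤ K) (hx : 0 ≤ x) (hy : 0 ≤ y)
    (h : √(a ^ 2 + b ^ 2) ≤ K * √(x ^ 2 + y ^ 2)) : a ≤ K * (x + y) :=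
  calc a ≤ √(a ^ 2 + b ^ 2) := Real.le_sqrt_of_sq_le (le_add_of_nonneg_right (sq_nonneg b))
    _ ≤ K * √(x ^ 2 + y ^ 2) := h
    _ ≤ K * (x + y) := mul_le_mul_of_nonneg_left (sqrt_sq_add_sq_le_add hx hy) hK

theorem nonneg_of_le_mul_sqrt {E F : Type*} [NormedAddCommGroup E] [NormedAddCommGroup F]
    {a K : ℝ} {w w' : E} {φ φ' : F} (ha : 0 ≤ a) (h : a ≤ K * √(‖w - w'‖ ^ 2 + ‖φ - φ'‖ ^ 2))
    (hne : ¬(w = w' ∧ φ = φ')) : 0 ≤ K := by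
  refine nonneg_of_mul_nonneg_left (ha.trans h) (Real.sqrt_pos.2 ?_)
  rcases not_and_or.1 hne with hw | hφ
  · have := norm_pos_iff.2 (sub_ne_zero.2 hw); positivity
  · have := norm_pos_iff.2 (sub_ne_zero.2 hφ); positivity

theorem mul_div_one_sub_sqrt_one_sub_le {α μ x : ℝ} (hα : 0 < α) (hμ : 0 < μ) (hαμ : α * μ ≤ 1)
    (hx : 0 ≤ x) : α * x / (1 - √(1 - α * μ)) ≤ 2 * x / μ := by
  have hsqrt : √(1 - α * μ) ≤ 1 - α * μ / 2 :=
    (Real.sqrt_le_left (by linarith)).2 (by nlinarith [sq_nonneg (α * μ)])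
  calc α * x / (1 - √(1 - α * μ)) ≤ α * x / (α * μ / 2) :=
        div_le_div_of_nonneg_left (by positivity) (by positivity) (by linarith)
    _ = 2 * x / μ := by field_simp

theorem rpow_three_mul_div_two {r : ℝ} (hr : 0 ≤ r) (N : ℕ) :
    r ^ (3 * (N : ℝ) / 2) = r ^ N * √r ^ N := by
  have h : r ^ (3 * (N : ℝ) / 2) = √r ^ (3 * N) := by
    rw [Real.sqrt_eq_rpow, ← Real.rpow_natCast, ← Real.rpow_mul hr]
    push_cast
    ring_nf
  rw [h, show 3 * N = 2 * N + N by ring, pow_add, pow_mul, Real.sq_sqrt hr]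

section Iterate

variable {E : Type*} [SeminormedAddCommGroup E] {f f' : E → E} {s δ : ℝ}

theorem norm_iterate_sub_iterate_le (hf : ∀ a b, ‖f a - f b‖ ≤ s * ‖a - b‖) (hs : 0 ≤ s)
    (m : ℕ) (a b : E) : ‖f^[m] a - f^[m] b‖ ≤ s ^ m * ‖a - b‖ := by
  induction m with
  | zero => simp
  | succ m ih =>
    rw [Function.iterate_succ_apply', Function.iterate_succ_apply', pow_succ', mul_assoc]
    exact (hf _ _).trans (mul_le_mul_of_nonneg_left ih hs)

theorem norm_iterate_sub_iterate_le_of_norm_sub_le (hf : ∀ a b, ‖f a - f b‖ ≤ s * ‖a - b‖)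
    (hs₀ : 0 ≤ s) (hs₁ : s < 1) (hff' : ∀ x, ‖f x - f' x‖ ≤ δ) (m : ℕ) (a : E) :
    ‖f^[m] a - f'^[m] a‖ ≤ δ / (1 - s) := by
  have hδ : 0 ≤ δ := (norm_nonneg _).trans (hff' a)
  have hs : 0 < 1 - s := sub_pos.2 hs₁
  induction m with
  | zero => simpa using div_nonneg hδ hs.le
  | succ m ih =>
    rw [Function.iterate_succ_apply', Function.iterate_succ_apply']
    calc ‖f (f^[m] a) - f' (f'^[m] a)‖
        ≤ ‖f (f^[m] a) - f (f'^[m] a)‖ + ‖f (f'^[m] a) - f' (f'^[m] a)‖ :=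
          norm_sub_le_norm_sub_add_norm_sub _ _ _
      _ ≤ s * (δ / (1 - s)) + δ :=
          add_le_add ((hf _ _).trans (mul_le_mul_of_nonneg_left ih hs₀)) (hff' _)
      _ = δ / (1 - s) := by field_simp; ring

end Iterate

section OperatorProduct

variable {𝕜 E F : Type*} [NontriviallyNormedField 𝕜] [SeminormedAddCommGroup E] [NormedSpace 𝕜 E]
  [SeminormedAddCommGroup F] [NormedSpace 𝕜 F]

theorem ContinuousLinearMap.norm_apply_sub_apply_le (P Q : E →L[𝕜] F) (u v : E) :
    ‖P u - Q v‖ ≤ ‖P‖ * ‖u - v‖ + ‖P - Q‖ * ‖v‖ := by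
  rw [show P u - Q v = P (u - v) + (P - Q) v by simp]
  exact (norm_add_le _ _).trans (add_le_add (P.le_opNorm _) ((P - Q).le_opNorm _))

variable {A B : ℕ → E →L[𝕜] E} {r : ℝ}

theorem norm_prod_map_range_le (hA : ∀ m, ‖A m‖ ≤ r) (n : ℕ) :
    ‖((List.range n).map A).prod‖ ≤ r ^ n := by
  induction n with
  | zero => exact ContinuousLinearMap.norm_id_le
  | succ n ih =>
    rw [List.prod_range_succ, pow_succ]
    exact (norm_mul_le _ _).trans (mul_le_mul ih (hA n) (norm_nonneg _) ((norm_nonneg _).trans ih))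

theorem norm_prod_map_range_sub_le (hA : ∀ m, ‖A m‖ ≤ r) (hB : ∀ m, ‖B m‖ ≤ r) (n : ℕ) :
    ‖((List.range n).map A).prod - ((List.range n).map B).prod‖
      ≤ r ^ (n - 1) * ∑ m ∈ Finset.range n, ‖A m - B m‖ := by
  induction n with
  | zero => simp
  | succ n ih =>
    have hr : 0 ≤ r := (norm_nonneg _).trans (hA 0)
    rw [List.prod_range_succ, List.prod_range_succ, Finset.sum_range_succ, Nat.add_sub_cancel]
    set PA := ((List.range n).map A).prod
    set PB := ((List.range n).map B).prod
    set S := ∑ m ∈ Finset.range n, ‖A m - B m‖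
    have hS : r ^ (n - 1) * S * r = r ^ n * S := by
      rcases Nat.eq_zero_or_pos n with rfl | hn
      · simp [S]
      · rw [mul_right_comm, pow_sub_one_mul hn.ne']
    calc ‖PA * A n - PB * B n‖ = ‖(PA - PB) * A n + PB * (A n - B n)‖ := by noncomm_ring
      _ ≤ ‖PA - PB‖ * ‖A n‖ + ‖PB‖ * ‖A n - B n‖ :=
          (norm_add_le _ _).trans (add_le_add (norm_mul_le _ _) (norm_mul_le _ _))
      _ ≤ r ^ (n - 1) * S * r + r ^ n * ‖A n - B n‖ := by
          gcongr
          · exact hA n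
          · exact norm_prod_map_range_le hB n
      _ = r ^ n * (S + ‖A n - B n‖) := by rw [hS]; ring

end OperatorProduct

theorem norm_sub_smul_sub_sub_smul_of_nonneg {E : Type*} [SeminormedAddCommGroup E]
    [NormedSpace ℝ E] {α : ℝ} (hα : 0 ≤ α) (a b c : E) :
    ‖(a - α • b) - (a - α • c)‖ = α * ‖b - c‖ := by
  rw [sub_sub_sub_cancel_left, ← smul_sub, norm_smul, Real.norm_of_nonneg hα, norm_sub_rev]

section InnerProduct

variable {E : Type*} [NormedAddCommGroup E] [InnerProductSpace ℝ E]

theorem ContinuousLinearMap.norm_le_of_isSymmetric {S : E →L[ℝ] E} {c : ℝ}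
    (hS : (S : E →ₗ[ℝ] E).IsSymmetric) (hc : 0 ≤ c) (h : ∀ x, |⟪S x, x⟫| ≤ c * ‖x‖ ^ 2) :
    ‖S‖ ≤ c := by
  rw [S.norm_eq_iSup_rayleighQuotient hS]
  refine ciSup_le fun x => ?_
  rcases eq_or_ne x 0 with rfl | hx
  · simpa using hc
  rw [ContinuousLinearMap.rayleighQuotient, ContinuousLinearMap.reApplyInnerSelf_apply, abs_div,
    abs_sq, div_le_iff₀ (by positivity)]
  exact h x

theorem ContinuousLinearMap.norm_one_sub_smul_le {H : E →L[ℝ] E} {μ L α : ℝ}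
    (hH : (H : E →ₗ[ℝ] E).IsSymmetric) (hμ : ∀ v, μ * ‖v‖ ^ 2 ≤ ⟪H v, v⟫) (hL : ‖H‖ ≤ L)
    (hμL : μ ≤ L) (hα : 0 ≤ α) (hαL : α * L ≤ 1) : ‖1 - α • H‖ ≤ 1 - α * μ := by
  refine norm_le_of_isSymmetric (fun x y => ?_) (by nlinarith) fun x => ?_
  · simp only [toLinearMap_sub, toLinearMap_one, toLinearMap_smul, LinearMap.sub_apply,
      Module.End.one_apply, LinearMap.smul_apply, coe_coe, inner_sub_left, inner_sub_right,
      real_inner_smul_left, real_inner_smul_right]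
    rw [show ⟪H x, y⟫ = ⟪x, H y⟫ from hH x y]
  · have hup : ⟪H x, x⟫ ≤ L * ‖x‖ ^ 2 :=
      calc ⟪H x, x⟫ ≤ ‖H x‖ * ‖x‖ := real_inner_le_norm _ _
        _ ≤ ‖H‖ * ‖x‖ * ‖x‖ := by gcongr; exact H.le_opNorm x
        _ ≤ L * ‖x‖ ^ 2 := by rw [mul_assoc, ← sq]; gcongr
    have hlow := hμ x
    have hx : ⟪(1 - α • H) x, x⟫ = ‖x‖ ^ 2 - α * ⟪H x, x⟫ := by
      simp [inner_sub_left, real_inner_smul_left]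
    rw [hx, abs_le]
    constructor <;> nlinarith [sq_nonneg ‖x‖]

theorem mul_norm_sub_sq_le_inner_of_strongConvex {f : E → ℝ} {g : E → E} {μ : ℝ}
    (hsc : ∀ w w', f w + ⟪g w, w' - w⟫ + μ / 2 * ‖w' - w‖ ^ 2 ≤ f w') (a b : E) :
    μ * ‖a - b‖ ^ 2 ≤ ⟪g a - g b, a - b⟫ := by
  have hab := hsc a b
  have hba := hsc b a
  rw [← neg_sub a b, inner_neg_right, norm_neg] at hab
  rw [inner_sub_left]
  linarith

theorem norm_sub_smul_sub_sub_smul_le_of_strongMono {g : E → E} {μ L α : ℝ}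
    (hmono : ∀ a b, μ * ‖a - b‖ ^ 2 ≤ ⟪g a - g b, a - b⟫)
    (hlip : ∀ a b, ‖g a - g b‖ ≤ L * ‖a - b‖) (hα : 0 ≤ α) (hαL : α * L ^ 2 ≤ μ) (a b : E) :
    ‖(a - α • g a) - (b - α • g b)‖ ≤ √(1 - α * μ) * ‖a - b‖ := by
  have hsq : ‖(a - α • g a) - (b - α • g b)‖ ^ 2 ≤ (1 - α * μ) * ‖a - b‖ ^ 2 := by
    have hd : ‖g a - g b‖ ^ 2 ≤ L ^ 2 * ‖a - b‖ ^ 2 := by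
      rw [← mul_pow]; exact pow_le_pow_left₀ (norm_nonneg _) (hlip a b) 2
    rw [show (a - α • g a) - (b - α • g b) = (a - b) - α • (g a - g b) by
        rw [smul_sub]; abel, norm_sub_sq_real, real_inner_smul_right, norm_smul,
      Real.norm_of_nonneg hα, real_inner_comm]
    nlinarith [hmono a b, mul_le_mul_of_nonneg_left hd (sq_nonneg α),
      mul_le_mul_of_nonneg_right hαL (mul_nonneg hα (sq_nonneg ‖a - b‖))]
  rw [← Real.sqrt_sq (norm_nonneg (a - b)), ← Real.sqrt_mul' _ (sq_nonneg _)]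
  exact Real.le_sqrt_of_sq_le hsq

theorem mul_norm_sq_le_inner_fderiv_of_strongMono {g : E → E} {μ : ℝ} {w : E}
    (hg : DifferentiableAt ℝ g w) (hmono : ∀ a b, μ * ‖a - b‖ ^ 2 ≤ ⟪g a - g b, a - b⟫) (v : E) :
    μ * ‖v‖ ^ 2 ≤ ⟪fderiv ℝ g w v, v⟫ := by
  set F : E → ℝ := fun x => ⟪v, g x - μ • x⟫
  have hF : HasFDerivAt F ((innerSL ℝ v).comp (fderiv ℝ g w - μ • ContinuousLinearMap.id ℝ E)) w :=
    (innerSL ℝ v).hasFDerivAt.comp w (hg.hasFDerivAt.sub ((hasFDerivAt_id w).const_smul μ))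
  have hray : ∀ t : ℝ, 0 < t → F w ≤ F (w + t • v) := by
    intro t ht
    have h := hmono (w + t • v) w
    rw [add_sub_cancel_left, norm_smul, mul_pow, Real.norm_of_nonneg ht.le,
      real_inner_smul_right] at h
    have h' : μ * t * ‖v‖ ^ 2 ≤ ⟪g (w + t • v) - g w, v⟫ := by nlinarith
    simp only [F, inner_sub_right, inner_smul_right, inner_add_right, real_inner_self_eq_norm_sq,
      real_inner_comm v] at h' ⊢
    nlinarith
  -- `w` minimises `F` on a set containing the open ray from `w` in direction `v`,
  -- so the derivative of `F` at `w` is nonnegative in the direction `v`.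
  have hmin : IsLocalMinOn F {x | F w ≤ F x} w := IsMinOn.localize fun _ hx => hx
  have hv : v ∈ posTangentConeAt {x | F w ≤ F x} w :=
    mem_posTangentConeAt_of_frequently_mem
      (eventually_nhdsWithin_of_forall (s := Set.Ioi 0) fun t ht => hray t ht).frequently
  have := hmin.hasFDerivWithinAt_nonneg hF.hasFDerivWithinAt hv
  simp only [ContinuousLinearMap.comp_sub, ContinuousLinearMap.comp_smulₛₗ, Real.ringHom_apply,
    ContinuousLinearMap.comp_id, sub_apply, ContinuousLinearMap.comp_apply,
    coe_innerSL_apply, smul_apply, real_inner_self_eq_norm_sq, smul_eq_mul,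
    sub_nonneg] at this
  rw [real_inner_comm] at this
  linarith

end InnerProduct

section Gradient

variable {E : Type*} [NormedAddCommGroup E] [InnerProductSpace ℝ E] [CompleteSpace E]
  {f : E → ℝ}

theorem ContDiff.differentiable_gradient (hf : ContDiff ℝ 2 f) : Differentiable ℝ (gradient f) :=
  (InnerProductSpace.toDual ℝ E).symm.differentiable.comp
    ((hf.fderiv_right (m := 1) (by norm_num)).differentiable one_ne_zero)

theorem norm_gradient_le_of_lipschitz {M : ℝ} (hM : 0 ≤ M)
    (hf : ∀ x y, |f x - f y| ≤ M * ‖x - y‖) (x : E) : ‖gradient f x‖ ≤ M :=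
  ((InnerProductSpace.toDual ℝ E).symm.norm_map _).trans_le
    (norm_fderiv_le_of_lip' ℝ hM (Filter.Eventually.of_forall fun y => hf y x))

theorem inner_fderiv_gradient_apply (w u v : E) :
    ⟪fderiv ℝ (gradient f) w u, v⟫ = fderiv ℝ (fderiv ℝ f) w u v := by
  change ⟪fderiv ℝ ((InnerProductSpace.toDual ℝ E).symm ∘ fderiv ℝ f) w u, v⟫ = _
  rw [LinearIsometryEquiv.comp_fderiv]
  exact InnerProductSpace.toDual_symm_apply

theorem ContDiff.isSymmetric_fderiv_gradient (hf : ContDiff ℝ 2 f) (w : E) :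
    (fderiv ℝ (gradient f) w : E →ₗ[ℝ] E).IsSymmetric := fun u v => by
  rw [ContinuousLinearMap.coe_coe, real_inner_comm _ u, inner_fderiv_gradient_apply,
    inner_fderiv_gradient_apply, hf.contDiffAt.isSymmSndFDerivAt (by simp)]

theorem ContDiff.norm_one_sub_smul_fderiv_gradient_le {μ L α : ℝ} (hf : ContDiff ℝ 2 f)
    (hmono : ∀ a b, μ * ‖a - b‖ ^ 2 ≤ ⟪gradient f a - gradient f b, a - b⟫)
    (hlip : ∀ a b, ‖gradient f a - gradient f b‖ ≤ L * ‖a - b‖) (hL : 0 ≤ L) (hμL : μ ≤ L)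
    (hα : 0 ≤ α) (hαL : α * L ≤ 1) (w : E) : ‖1 - α • fderiv ℝ (gradient f) w‖ ≤ 1 - α * μ :=
  ContinuousLinearMap.norm_one_sub_smul_le (hf.isSymmetric_fderiv_gradient w)
    (mul_norm_sq_le_inner_fderiv_of_strongMono (hf.differentiable_gradient w) hmono)
    (norm_fderiv_le_of_lip' ℝ hL (Filter.Eventually.of_forall fun x => hlip x w)) hμL hα hαL

end Gradient

section MetaGradient

variable {E F : Type*} [NormedAddCommGroup E] [NormedSpace ℝ E] [SeminormedAddCommGroup F]
  {T : F → E → E} {J : E → F → E →L[ℝ] E} {G : E → F → E} {r β L M : ℝ}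

/-- In ANIL, `T φ` is one inner gradient step, `J x φ = I - α ∇²_w L_S(x, φ)` and
`G = ∇_w L_D`. -/
def metaGrad (T : F → E → E) (J : E → F → E →L[ℝ] E) (G : E → F → E) (N : ℕ) (w : E) (φ : F) :
    E :=
  ((List.range N).map fun m => J ((T φ)^[m] w) φ).prod (G ((T φ)^[N] w) φ)

theorem norm_metaGrad_sub_le_of_dist_le (hJ : ∀ x φ, ‖J x φ‖ ≤ r)
    (hJ_lip : ∀ x x' φ φ', ‖J x φ - J x' φ'‖ ≤ β * (‖x - x'‖ + ‖φ - φ'‖)) (hβ : 0 ≤ β)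
    (hG_lip : ∀ x x' φ φ', ‖G x φ - G x' φ'‖ ≤ L * (‖x - x'‖ + ‖φ - φ'‖)) (hL : 0 ≤ L)
    (hG : ∀ x φ, ‖G x φ‖ ≤ M) {N : ℕ} {w w' : E} {φ φ' : F} {D : ℕ → ℝ}
    (hD : ∀ m, ‖(T φ)^[m] w - (T φ')^[m] w'‖ + ‖φ - φ'‖ ≤ D m) :
    ‖metaGrad T J G N w φ - metaGrad T J G N w' φ'‖
      ≤ r ^ N * L * D N + r ^ (N - 1) * M * β * ∑ m ∈ Finset.range N, D m := by
  have hr : 0 ≤ r := (norm_nonneg _).trans (hJ w φ)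
  have hJ_sum : ∑ m ∈ Finset.range N, ‖J ((T φ)^[m] w) φ - J ((T φ')^[m] w') φ'‖
      ≤ β * ∑ m ∈ Finset.range N, D m := by
    rw [Finset.mul_sum]
    exact Finset.sum_le_sum fun m _ => (hJ_lip _ _ _ _).trans (mul_le_mul_of_nonneg_left (hD m) hβ)
  have hP := norm_prod_map_range_le (fun m => hJ ((T φ)^[m] w) φ) N
  have hPQ := (norm_prod_map_range_sub_le (fun m => hJ _ _) (fun m => hJ _ _) N).trans
    (mul_le_mul_of_nonneg_left hJ_sum (pow_nonneg hr _))
  have hGN := (hG_lip _ _ _ _).trans (mul_le_mul_of_nonneg_left (hD N) hL)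
  refine (ContinuousLinearMap.norm_apply_sub_apply_le _ _ _ _).trans ?_
  calc _ ≤ r ^ N * (L * D N) + r ^ (N - 1) * (β * ∑ m ∈ Finset.range N, D m) * M :=
        add_le_add (mul_le_mul hP hGN (norm_nonneg _) (pow_nonneg hr _))
          (mul_le_mul hPQ (hG _ _) (norm_nonneg _) ((norm_nonneg _).trans hPQ))
    _ = _ := by ring

theorem norm_metaGrad_sub_le {s δ : ℝ} (hT : ∀ φ a b, ‖T φ a - T φ b‖ ≤ s * ‖a - b‖)
    (hs₀ : 0 ≤ s) (hs₁ : s < 1) (hT_param : ∀ φ φ' x, ‖T φ x - T φ' x‖ ≤ δ * ‖φ - φ'‖)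
    (hJ : ∀ x φ, ‖J x φ‖ ≤ r)
    (hJ_lip : ∀ x x' φ φ', ‖J x φ - J x' φ'‖ ≤ β * (‖x - x'‖ + ‖φ - φ'‖)) (hβ : 0 ≤ β)
    (hG_lip : ∀ x x' φ φ', ‖G x φ - G x' φ'‖ ≤ L * (‖x - x'‖ + ‖φ - φ'‖)) (hL : 0 ≤ L)
    (hG : ∀ x φ, ‖G x φ‖ ≤ M) (N : ℕ) (w₁ w₂ : E) (φ₁ φ₂ : F) :
    ‖metaGrad T J G N w₁ φ₁ - metaGrad T J G N w₂ φ₂‖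
      ≤ (r ^ N * s ^ N * L + β * M / (1 - s) * r ^ (N - 1)) * ‖w₁ - w₂‖
        + (r ^ N * L + β * M * N * r ^ (N - 1)) * (δ / (1 - s) + 1) * ‖φ₁ - φ₂‖ := by
  set d := ‖w₁ - w₂‖
  set e := ‖φ₁ - φ₂‖
  have hr : 0 ≤ r := (norm_nonneg _).trans (hJ w₁ φ₁)
  have hM : 0 ≤ M := (norm_nonneg _).trans (hG w₁ φ₁)
  have hw := norm_metaGrad_sub_le_of_dist_le hJ hJ_lip hβ hG_lip hL hG (N := N) (φ := φ₁)
    (φ' := φ₁) (D := fun m => s ^ m * d) fun m => by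
      simpa using norm_iterate_sub_iterate_le (hT φ₁) hs₀ m w₁ w₂
  have hφ := norm_metaGrad_sub_le_of_dist_le hJ hJ_lip hβ hG_lip hL hG (N := N) (w := w₂)
    (w' := w₂) (D := fun _ => (δ / (1 - s) + 1) * e) fun m => by
      have := norm_iterate_sub_iterate_le_of_norm_sub_le (hT φ₁) hs₀ hs₁ (hT_param φ₁ φ₂) m w₂
      rw [mul_div_right_comm] at this
      rw [add_mul, one_mul]
      exact add_le_add_left this _
  have hgeom : ∑ m ∈ Finset.range N, s ^ m * d ≤ d / (1 - s) := by
    rw [← Finset.sum_mul, div_eq_mul_inv, mul_comm d, ← one_div]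
    gcongr
    simpa using geom_sum_Ico_le_of_lt_one (m := 0) (n := N) hs₀ hs₁
  simp only [Finset.sum_const, Finset.card_range, nsmul_eq_mul] at hφ
  calc _ ≤ ‖metaGrad T J G N w₁ φ₁ - metaGrad T J G N w₂ φ₁‖
        + ‖metaGrad T J G N w₂ φ₁ - metaGrad T J G N w₂ φ₂‖ :=
        norm_sub_le_norm_sub_add_norm_sub _ _ _
    _ ≤ _ := add_le_add hw hφ
    _ ≤ r ^ N * L * (s ^ N * d) + r ^ (N - 1) * M * β * (d / (1 - s))
        + (r ^ N * L * ((δ / (1 - s) + 1) * e)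
          + r ^ (N - 1) * M * β * (N * ((δ / (1 - s) + 1) * e))) := by
        gcongr
    _ = _ := by ring

end MetaGradient

section ANIL

variable {h : Euc nw × Euc nf → ℝ} {L M μ ρ α : ℝ}

def innerStep (h : Euc nw × Euc nf → ℝ) (α : ℝ) (φ : Euc nf) (w : Euc nw) : Euc nw :=
  w - α • gradW h w φ

def innerStepJac (h : Euc nw × Euc nf → ℝ) (α : ℝ) (w : Euc nw) (φ : Euc nf) :
    Euc nw →L[ℝ] Euc nw :=
  1 - α • hessW h w φ

theorem norm_gradW_sub_le_of_sqrt (hL : 0 ≤ L)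
    (hLip : ∀ (w w' : Euc nw) (φ φ' : Euc nf),
      √(‖gradW h w φ - gradW h w' φ'‖ ^ 2 + ‖gradPh h w φ - gradPh h w' φ'‖ ^ 2)
        ≤ L * √(‖w - w'‖ ^ 2 + ‖φ - φ'‖ ^ 2))
    (w w' : Euc nw) (φ φ' : Euc nf) :
    ‖gradW h w φ - gradW h w' φ'‖ ≤ L * (‖w - w'‖ + ‖φ - φ'‖) :=
  le_mul_add_of_sqrt_le_mul_sqrt hL (norm_nonneg _) (norm_nonneg _) (hLip w w' φ φ')

theorem norm_gradW_le (hM : 0 ≤ M)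
    (hLip : ∀ (w w' : Euc nw) (φ φ' : Euc nf),
      |h (w, φ) - h (w', φ')| ≤ M * √(‖w - w'‖ ^ 2 + ‖φ - φ'‖ ^ 2))
    (w : Euc nw) (φ : Euc nf) : ‖gradW h w φ‖ ≤ M :=
  norm_gradient_le_of_lipschitz hM (fun a b => by simpa using hLip a b φ φ) w

theorem norm_innerStep_sub_le
    (hsc : ∀ (φ : Euc nf) (w w' : Euc nw),
      h (w, φ) + ⟪gradW h w φ, w' - w⟫ + μ / 2 * ‖w' - w‖ ^ 2 ≤ h (w', φ))
    (hlip : ∀ w w' φ φ', ‖gradW h w φ - gradW h w' φ'‖ ≤ L * (‖w - w'‖ + ‖φ - φ'‖))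
    (hα : 0 ≤ α) (hαL : α * L ^ 2 ≤ μ) (φ : Euc nf) (a b : Euc nw) :
    ‖innerStep h α φ a - innerStep h α φ b‖ ≤ √(1 - α * μ) * ‖a - b‖ :=
  norm_sub_smul_sub_sub_smul_le_of_strongMono (mul_norm_sub_sq_le_inner_of_strongConvex (hsc φ))
    (fun a b => by simpa using hlip a b φ φ) hα hαL a b

theorem norm_innerStep_sub_innerStep_le
    (hlip : ∀ w w' φ φ', ‖gradW h w φ - gradW h w' φ'‖ ≤ L * (‖w - w'‖ + ‖φ - φ'‖))
    (hα : 0 ≤ α) (φ φ' : Euc nf) (w : Euc nw) :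
    ‖innerStep h α φ w - innerStep h α φ' w‖ ≤ α * L * ‖φ - φ'‖ := by
  rw [innerStep, innerStep, norm_sub_smul_sub_sub_smul_of_nonneg hα, mul_assoc]
  gcongr
  simpa using hlip w w φ φ'

theorem norm_innerStepJac_le (hh : ContDiff ℝ 2 h)
    (hsc : ∀ (φ : Euc nf) (w w' : Euc nw),
      h (w, φ) + ⟪gradW h w φ, w' - w⟫ + μ / 2 * ‖w' - w‖ ^ 2 ≤ h (w', φ))
    (hlip : ∀ w w' φ φ', ‖gradW h w φ - gradW h w' φ'‖ ≤ L * (‖w - w'‖ + ‖φ - φ'‖))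
    (hL : 0 ≤ L) (hμL : μ ≤ L) (hα : 0 ≤ α) (hαL : α * L ≤ 1) (w : Euc nw) (φ : Euc nf) :
    ‖innerStepJac h α w φ‖ ≤ 1 - α * μ :=
  ContDiff.norm_one_sub_smul_fderiv_gradient_le (f := fun w => h (w, φ))
    (hh.comp (contDiff_id.prodMk contDiff_const)) (mul_norm_sub_sq_le_inner_of_strongConvex (hsc φ))
    (fun a b => (by simpa using hlip a b φ φ : ‖gradW h a φ - gradW h b φ‖ ≤ L * ‖a - b‖)) hL hμL
    hα hαL w

theorem norm_innerStepJac_sub_le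
    (hρ : ∀ (w w' : Euc nw) (φ φ' : Euc nf),
      ‖hessW h w φ - hessW h w' φ'‖ ≤ ρ * √(‖w - w'‖ ^ 2 + ‖φ - φ'‖ ^ 2))
    (hρ₀ : 0 ≤ ρ) (hα : 0 ≤ α) (w w' : Euc nw) (φ φ' : Euc nf) :
    ‖innerStepJac h α w φ - innerStepJac h α w' φ'‖ ≤ α * ρ * (‖w - w'‖ + ‖φ - φ'‖) := by
  refine (norm_sub_smul_sub_sub_smul_of_nonneg hα _ _ _).trans_le ?_
  rw [mul_assoc]
  gcongr
  exact (hρ w w' φ φ').trans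
    (mul_le_mul_of_nonneg_left (sqrt_sq_add_sq_le_add (norm_nonneg _) (norm_nonneg _)) hρ₀)

end ANIL

theorem anil_meta_gradient_w_smoothness_general (nw nf : ℕ) (LS LD : Euc nw × Euc nf → ℝ)
    (L M ρ μ α : ℝ) (N : ℕ) (hμ : 0 < μ) (hμL : μ ≤ L)
    (hCS : ContDiff ℝ 2 LS)
    (hLipS : ∀ (w w' : Euc nw) (φ φ' : Euc nf),
      Real.sqrt (‖gradW LS w φ - gradW LS w' φ'‖ ^ 2 + ‖gradPh LS w φ - gradPh LS w' φ'‖ ^ 2)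
        ≤ L * Real.sqrt (‖w - w'‖ ^ 2 + ‖φ - φ'‖ ^ 2))
    (hLipD : ∀ (w w' : Euc nw) (φ φ' : Euc nf),
      Real.sqrt (‖gradW LD w φ - gradW LD w' φ'‖ ^ 2 + ‖gradPh LD w φ - gradPh LD w' φ'‖ ^ 2)
        ≤ L * Real.sqrt (‖w - w'‖ ^ 2 + ‖φ - φ'‖ ^ 2))
    (hMD : ∀ (w w' : Euc nw) (φ φ' : Euc nf),
      |LD (w, φ) - LD (w', φ')| ≤ M * Real.sqrt (‖w - w'‖ ^ 2 + ‖φ - φ'‖ ^ 2))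
    (hρ : ∀ (w w' : Euc nw) (φ φ' : Euc nf),
      ‖hessW LS w φ - hessW LS w' φ'‖ ≤ ρ * Real.sqrt (‖w - w'‖ ^ 2 + ‖φ - φ'‖ ^ 2))
    (hsc : ∀ (φ : Euc nf) (w w' : Euc nw),
      LS (w, φ) + ⟪gradW LS w φ, w' - w⟫ + μ / 2 * ‖w' - w‖ ^ 2 ≤ LS (w', φ))
    (hα : α = μ / L ^ 2)
    (wpath : Euc nw → Euc nf → ℕ → Euc nw)
    (h0 : ∀ w φ, wpath w φ 0 = w)
    (hrec : ∀ w φ m, wpath w φ (m + 1) = wpath w φ m - α • gradW LS (wpath w φ m) φ)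
    (gmap : Euc nw → Euc nf → Euc nw)
    (hg : ∀ w φ, gmap w φ =
      (((List.range N).map (fun m =>
          (1 : Euc nw →L[ℝ] Euc nw) - α • hessW LS (wpath w φ m) φ)).prod)
        (gradW LD (wpath w φ N) φ)) :
    ∀ (w₁ w₂ : Euc nw) (φ₁ φ₂ : Euc nf),
      ‖gmap w₁ φ₁ - gmap w₂ φ₂‖
        ≤ ((1 - α * μ) ^ (3 * (N : ℝ) / 2) * L + (2 * ρ * M / μ) * (1 - α * μ) ^ (N - 1))
            * ‖w₁ - w₂‖
          + ((1 - α * μ) ^ N * L + α * ρ * M * (N : ℝ) * (1 - α * μ) ^ (N - 1))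
              * (2 * L / μ + 1) * ‖φ₁ - φ₂‖ := by
  intro w₁ w₂ φ₁ φ₂
  -- nonnegativity of `ρ` and `M` can only be read off the hypotheses at two distinct points
  by_cases hsame : w₁ = w₂ ∧ φ₁ = φ₂
  · obtain ⟨rfl, rfl⟩ := hsame
    simp
  have hρ₀ := nonneg_of_le_mul_sqrt (norm_nonneg _) (hρ w₁ w₂ φ₁ φ₂) hsame
  have hM₀ := nonneg_of_le_mul_sqrt (abs_nonneg _) (hMD w₁ w₂ φ₁ φ₂) hsame
  have hL : 0 < L := hμ.trans_le hμL
  have hα₀ : 0 < α := by rw [hα]; positivity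
  have hαL : α * L ≤ 1 := by rw [hα, div_mul_eq_mul_div, div_le_one (by positivity)]; nlinarith
  have hαμ : α * μ ≤ 1 := (mul_le_mul_of_nonneg_left hμL hα₀.le).trans hαL
  have hgradS := norm_gradW_sub_le_of_sqrt hL.le hLipS
  obtain rfl : wpath = fun w φ m => (innerStep LS α φ)^[m] w := by
    funext w φ m
    induction m with
    | zero => exact h0 w φ
    | succ m ih => rw [hrec, ih, Function.iterate_succ_apply', innerStep]
  obtain rfl : gmap = metaGrad (innerStep LS α) (innerStepJac LS α) (gradW LD) N := funext₂ hg
  have hαL₂ : α * L ^ 2 ≤ μ := by rw [hα, div_mul_cancel₀ _ (by positivity)]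
  refine (norm_metaGrad_sub_le (norm_innerStep_sub_le hsc hgradS hα₀.le hαL₂) (Real.sqrt_nonneg _)
    ((Real.sqrt_lt' one_pos).2 (by nlinarith)) (norm_innerStep_sub_innerStep_le hgradS hα₀.le)
    (norm_innerStepJac_le hCS hsc hgradS hL.le hμL hα₀.le hαL)
    (norm_innerStepJac_sub_le hρ hρ₀ hα₀.le) (by positivity)
    (norm_gradW_sub_le_of_sqrt hL.le hLipD) hL.le (norm_gradW_le hM₀ hMD) N w₁ w₂ φ₁ φ₂).trans ?_
  rw [rpow_three_mul_div_two (by linarith)]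
  gcongr (_ + ?_ * _) * _ + _ * (?_ + _) * _
  · simpa only [mul_assoc] using mul_div_one_sub_sqrt_one_sub_le hα₀ hμ hαμ (mul_nonneg hρ₀ hM₀)
  · exact mul_div_one_sub_sqrt_one_sub_le hα₀ hμ hαμ hL.le

/-- Proposition 7.2, part 1: smoothness of the ANIL partial
meta-gradient in `w` under a strongly convex inner loop, per-task explicit bound.
Joint Lipschitz conditions on the product space are expressed via the pairs of
partial derivatives and the `ℓ²` norm. -/
theorem anil_meta_gradient_w_smoothness (nw nf : ℕ) (LS LD : Euc nw × Euc nf → ℝ)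
    (L M ρ μ α : ℝ) (N : ℕ) (hN : 1 ≤ N) (hμ : 0 < μ) (hμL : μ ≤ L)
    (hCS : ContDiff ℝ 2 LS) (hCD : ContDiff ℝ 2 LD)
    (hLipS : ∀ (w w' : Euc nw) (φ φ' : Euc nf),
      Real.sqrt (‖gradW LS w φ - gradW LS w' φ'‖ ^ 2 + ‖gradPh LS w φ - gradPh LS w' φ'‖ ^ 2)
        ≤ L * Real.sqrt (‖w - w'‖ ^ 2 + ‖φ - φ'‖ ^ 2))
    (hLipD : ∀ (w w' : Euc nw) (φ φ' : Euc nf),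
      Real.sqrt (‖gradW LD w φ - gradW LD w' φ'‖ ^ 2 + ‖gradPh LD w φ - gradPh LD w' φ'‖ ^ 2)
        ≤ L * Real.sqrt (‖w - w'‖ ^ 2 + ‖φ - φ'‖ ^ 2))
    (hMD : ∀ (w w' : Euc nw) (φ φ' : Euc nf),
      |LD (w, φ) - LD (w', φ')| ≤ M * Real.sqrt (‖w - w'‖ ^ 2 + ‖φ - φ'‖ ^ 2))
    (hρ : ∀ (w w' : Euc nw) (φ φ' : Euc nf),
      ‖hessW LS w φ - hessW LS w' φ'‖ ≤ ρ * Real.sqrt (‖w - w'‖ ^ 2 + ‖φ - φ'‖ ^ 2))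
    (hsc : ∀ (φ : Euc nf) (w w' : Euc nw),
      LS (w, φ) + ⟪gradW LS w φ, w' - w⟫ + μ / 2 * ‖w' - w‖ ^ 2 ≤ LS (w', φ))
    (hα : α = μ / L ^ 2)
    (wpath : Euc nw → Euc nf → ℕ → Euc nw)
    (h0 : ∀ w φ, wpath w φ 0 = w)
    (hrec : ∀ w φ m, wpath w φ (m + 1) = wpath w φ m - α • gradW LS (wpath w φ m) φ)
    (gmap : Euc nw → Euc nf → Euc nw)
    (hg : ∀ w φ, gmap w φ =
      (((List.range N).map (fun m =>
          (1 : Euc nw →L[ℝ] Euc nw) - α • hessW LS (wpath w φ m) φ)).prod)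
        (gradW LD (wpath w φ N) φ)) :
    ∀ (w₁ w₂ : Euc nw) (φ₁ φ₂ : Euc nf),
      ‖gmap w₁ φ₁ - gmap w₂ φ₂‖
        ≤ ((1 - α * μ) ^ (3 * (N : ℝ) / 2) * L + (2 * ρ * M / μ) * (1 - α * μ) ^ (N - 1))
            * ‖w₁ - w₂‖
          + ((1 - α * μ) ^ N * L + α * ρ * M * (N : ℝ) * (1 - α * μ) ^ (N - 1))
              * (2 * L / μ + 1) * ‖φ₁ - φ₂‖ :=
  anil_meta_gradient_w_smoothness_general nw nf LS LD L M ρ μ α N hμ hμL hCS hLipS hLipD hMD hρ hsc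
    hα wpath h0 hrec gmap hg
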